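/- arXiv:2110.02013 — 2 statements merged into one kernel-verified Lean document; each statement's English description precedes it below -/
import Mathlib

section
/- Let B be a bipartite graph with a perfect matching, let a1, a2 ∈ V1 and b1, b2 ∈ V2 be four distinct vertices, S = {a1, a2, b1, b2}, and let F be an extendible S-cover of size four with u a2 ∈ F and v b1 ∈ F (so u ∈ V2 ∖ S and v ∈ V1 ∖ S). Let B' = B − u − v + a2b1 be the graph obtained from B by deleting u and v and adding the edge a2b1, and let F' = (F ∖ {u a2, v b1}) ∪ {a2b1}. Then B is an F-instance of 2-MLP for (a1, a2) and (b1, b2) if and only if B' is an F'-instance of 2-MLP for (a1, a2) and (b1, b2). -/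
namespace Paper

open SimpleGraph

variable {V : Type*} {W : Type*}

/-- `M` is a perfect matching of the vertex set `S` in the graph `G`:
a set of pairwise disjoint edges of `G`, all within `S`, covering every vertex of `S`. -/
def IsPMOn (G : SimpleGraph V) (S : Set V) (M : Set (Sym2 V)) : Prop :=
  (∀ e ∈ M, e ∈ G.edgeSet) ∧ (∀ e ∈ M, ∀ v ∈ e, v ∈ S) ∧
    ∀ v ∈ S, ∃! e, e ∈ M ∧ v ∈ e

/-- `M` is a perfect matching of `G`. -/
def IsPM (G : SimpleGraph V) (M : Set (Sym2 V)) : Prop :=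
  IsPMOn G Set.univ M

/-- The edges in `F` are pairwise vertex-disjoint. -/
def PairwiseDisjointEdges (F : Set (Sym2 V)) : Prop :=
  ∀ e ∈ F, ∀ f ∈ F, e ≠ f → ∀ x : V, x ∈ e → x ∉ f

/-- All edges of `G` have both endpoints in `S`. -/
def EdgesWithin (G : SimpleGraph V) (S : Set V) : Prop :=
  ∀ ⦃x y : V⦄, G.Adj x y → x ∈ S ∧ y ∈ S

def ConnectedOn (G : SimpleGraph V) (S : Set V) : Prop :=
  S.Nonempty ∧ ∀ x ∈ S, ∀ y ∈ S, G.Reachable x y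

/-- The graph `G` with vertex set `S` is a brace: it is connected and every matching of
size at most two extends to a perfect matching. -/
def IsBraceOn (G : SimpleGraph V) (S : Set V) : Prop :=
  EdgesWithin G S ∧ ConnectedOn G S ∧
    ∀ F : Set (Sym2 V), F ⊆ G.edgeSet → PairwiseDisjointEdges F → F.ncard ≤ 2 →
      ∃ M, IsPMOn G S M ∧ F ⊆ M

def IsBrace (G : SimpleGraph V) : Prop :=
  IsBraceOn G Set.univ

def IsBipartitionOf (G : SimpleGraph V) (V1 V2 : Set V) : Prop :=
  Disjoint V1 V2 ∧ V1 ∪ V2 = Set.univ ∧ ∀ ⦃x y : V⦄, G.Adj x y → (x ∈ V1 ↔ y ∈ V2)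

def IsBipartite (G : SimpleGraph V) : Prop :=
  ∃ V1 V2 : Set V, IsBipartitionOf G V1 V2

def MatchingCoveredOn (G : SimpleGraph V) (S : Set V) : Prop :=
  EdgesWithin G S ∧ ConnectedOn G S ∧ ∀ e ∈ G.edgeSet, ∃ M, IsPMOn G S M ∧ e ∈ M

def MatchingCovered (G : SimpleGraph V) : Prop :=
  MatchingCoveredOn G Set.univ

/-- Every vertex of `A` is covered exactly once by an edge of `M ∩ Es`;
i.e. `M ∩ Es` is a perfect matching of the subgraph with vertex set `A` and edge set `Es`. -/
def MatchesExactly (M Es : Set (Sym2 V)) (A : Set V) : Prop :=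
  ∀ v ∈ A, ∃! e, e ∈ M ∧ e ∈ Es ∧ v ∈ e

/-- `M` restricted to the edges of `P` with both endpoints in `A` is a
perfect matching of `A`; i.e. `M ∩ E(P ∩ A)` is a perfect matching of `P ∩ A`. -/
def WalkMConfOn (G : SimpleGraph V) (M : Set (Sym2 V)) {u v : V} (P : G.Walk u v)
    (A : Set V) : Prop :=
  ∀ x ∈ A, ∃! e : Sym2 V, e ∈ M ∧ e ∈ P.edges ∧ (∀ y ∈ e, y ∈ A) ∧ x ∈ e

/-- The path `P` is `M`-conformal: `M ∩ E(P)` is a perfect matching of `P`. -/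
def MConformalWalk (G : SimpleGraph V) (M : Set (Sym2 V)) {u v : V} (P : G.Walk u v) : Prop :=
  WalkMConfOn G M P {x | x ∈ P.support}

/-- The path `P` is internally `M`-conformal: removing both endpoints leaves
an `M`-conformal path. -/
def InternallyMConformal (G : SimpleGraph V) (M : Set (Sym2 V)) {u v : V}
    (P : G.Walk u v) : Prop :=
  WalkMConfOn G M P {x | x ∈ P.support ∧ x ≠ u ∧ x ≠ v}

/-- The path `P` is `M`-alternating: there is a set `S` of endpoints of `P`
such that `P − S` is `M`-conformal. -/
def MAlternating (G : SimpleGraph V) (M : Set (Sym2 V)) {u v : V} (P : G.Walk u v) : Prop :=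
  ∃ S ⊆ ({u, v} : Set V), WalkMConfOn G M P {x | x ∈ P.support ∧ x ∉ S}

/-- The cycle `C` is `M`-conformal: `M ∩ E(C)` is a perfect matching of `C`. -/
def MConformalCycle (G : SimpleGraph V) (M : Set (Sym2 V)) {c : V} (C : G.Walk c c) : Prop :=
  ∀ x ∈ C.support, ∃! e, e ∈ M ∧ e ∈ C.edges ∧ x ∈ e

/-- The cycle `C` is conformal in the graph `G` with vertex set `S`:
`G − V(C)` has a perfect matching. -/
def ConformalCycleOn (G : SimpleGraph V) (S : Set V) {c : V} (C : G.Walk c c) : Prop :=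
  ∃ M, IsPMOn G (S \ {x | x ∈ C.support}) M

def ConformalCycle (G : SimpleGraph V) {c : V} (C : G.Walk c c) : Prop :=
  ConformalCycleOn G Set.univ C

/-- The four vertices appear on the cycle `C` in the listed cyclic order. -/
def InCyclicOrder (G : SimpleGraph V) {c : V} (C : G.Walk c c) (s1 s2 t1 t2 : V) : Prop :=
  ∃ n : ℕ, List.Sublist [s1, s2, t1, t2] (C.support.tail.rotate n) ∨
    List.Sublist [s1, s2, t1, t2] (C.support.tail.reverse.rotate n)

/-- The paths `P1` (from `s1` to `t1`) and `P2` (from `s2` to `t2`) form a matching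
cross over the cycle `C` with respect to the perfect matching `M` of `(G, S)`. -/
def IsMatchingCrossOn (G : SimpleGraph V) (S : Set V) {c s1 t1 s2 t2 : V}
    (C : G.Walk c c) (M : Set (Sym2 V)) (P1 : G.Walk s1 t1) (P2 : G.Walk s2 t2) : Prop :=
  IsPMOn G S M ∧ [s1, s2, t1, t2].Nodup ∧ InCyclicOrder G C s1 s2 t1 t2 ∧
    P1.IsPath ∧ P2.IsPath ∧ MAlternating G M P1 ∧ MAlternating G M P2 ∧
    (∀ x : V, x ∈ P1.support → x ∉ P2.support) ∧
    (∀ x ∈ P1.support, x ≠ s1 → x ≠ t1 → x ∉ C.support) ∧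
    (∀ x ∈ P2.support, x ≠ s2 → x ≠ t2 → x ∉ C.support)

def HasMatchingCrossOn (G : SimpleGraph V) (S : Set V) {c : V} (C : G.Walk c c) : Prop :=
  ∃ (M : Set (Sym2 V)) (s1 t1 s2 t2 : V) (P1 : G.Walk s1 t1) (P2 : G.Walk s2 t2),
    IsMatchingCrossOn G S C M P1 P2

def HasMatchingCross (G : SimpleGraph V) {c : V} (C : G.Walk c c) : Prop :=
  HasMatchingCrossOn G Set.univ C

/-- `C + P1 + P2` is a conformal subgraph of `(G, S)`. -/
def CrossConformalOn (G : SimpleGraph V) (S : Set V) {c s1 t1 s2 t2 : V}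
    (C : G.Walk c c) (P1 : G.Walk s1 t1) (P2 : G.Walk s2 t2) : Prop :=
  ∃ N, IsPMOn G S N ∧
    MatchesExactly N
      ({f | f ∈ C.edges} ∪ {f | f ∈ P1.edges} ∪ {f | f ∈ P2.edges})
      ({x | x ∈ C.support} ∪ {x | x ∈ P1.support} ∪ {x | x ∈ P2.support})

/-- There is a conformal cross over the cycle `C` in `G`. -/
def HasConformalCross (G : SimpleGraph V) {c : V} (C : G.Walk c c) : Prop :=
  ∃ (M : Set (Sym2 V)) (s1 t1 s2 t2 : V) (P1 : G.Walk s1 t1) (P2 : G.Walk s2 t2),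
    IsMatchingCrossOn G Set.univ C M P1 P2 ∧ CrossConformalOn G Set.univ C P1 P2

/-- A bisubdivision of the graph `H` inside the graph `G`: every edge of `H` is replaced
by a path of odd length (i.e., subdivided an even number of times), and those paths
pairwise meet only in branch vertices. -/
structure Bisubdivision (H : SimpleGraph W) (G : SimpleGraph V) where
  bv : W → V
  bv_inj : Function.Injective bv
  link : ∀ ⦃x y : W⦄, H.Adj x y → G.Walk (bv x) (bv y)
  link_isPath : ∀ ⦃x y : W⦄ (h : H.Adj x y), (link h).IsPath
  link_odd : ∀ ⦃x y : W⦄ (h : H.Adj x y), Odd (link h).length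
  link_symm : ∀ ⦃x y : W⦄ (h : H.Adj x y), link h.symm = (link h).reverse
  link_branch : ∀ ⦃x y : W⦄ (h : H.Adj x y) (z : W), bv z ∈ (link h).support → z = x ∨ z = y
  link_meet : ∀ ⦃x y x' y' : W⦄ (h : H.Adj x y) (h' : H.Adj x' y'), s(x, y) ≠ s(x', y') →
    ∀ v : V, v ∈ (link h).support → v ∈ (link h').support →
      (v = bv x ∨ v = bv y) ∧ (v = bv x' ∨ v = bv y')

def Bisubdivision.verts {H : SimpleGraph W} {G : SimpleGraph V}
    (L : Bisubdivision H G) : Set V :=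
  {v | ∃ (x y : W) (h : H.Adj x y), v ∈ (L.link h).support}

def Bisubdivision.edgeSet {H : SimpleGraph W} {G : SimpleGraph V}
    (L : Bisubdivision H G) : Set (Sym2 V) :=
  {e | ∃ (x y : W) (h : H.Adj x y), e ∈ (L.link h).edges}

/-- The bisubdivision `L` is an `M`-conformal subgraph of `G`. -/
def Bisubdivision.MConformal {H : SimpleGraph W} {G : SimpleGraph V}
    (L : Bisubdivision H G) (M : Set (Sym2 V)) : Prop :=
  MatchesExactly M L.edgeSet L.verts

/-- The bisubdivision `L` is a conformal subgraph of `(G, S)`. -/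
def Bisubdivision.ConformalOn {H : SimpleGraph W} {G : SimpleGraph V}
    (L : Bisubdivision H G) (S : Set V) : Prop :=
  ∃ M, IsPMOn G S M ∧ L.MConformal M

abbrev K33 : SimpleGraph (Fin 3 ⊕ Fin 3) := completeBipartiteGraph (Fin 3) (Fin 3)

/-- `G` contains a conformal bisubdivision of `K_{3,3}`. -/
def ContainsK33 (G : SimpleGraph V) : Prop :=
  ∃ L : Bisubdivision K33 G, L.ConformalOn Set.univ

def K33Free (G : SimpleGraph V) : Prop :=
  ¬ ContainsK33 G

def C4verts (a1 b1 a2 b2 : V) : Set V := {a1, b1, a2, b2}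

def C4edges (a1 b1 a2 b2 : V) : Set (Sym2 V) := {s(a1, b1), s(b1, a2), s(a2, b2), s(b2, a1)}

/-- `a1 b1 a2 b2` is a cycle of length four in `G`. -/
def IsC4In (G : SimpleGraph V) (a1 b1 a2 b2 : V) : Prop :=
  [a1, b1, a2, b2].Nodup ∧ G.Adj a1 b1 ∧ G.Adj b1 a2 ∧ G.Adj a2 b2 ∧ G.Adj b2 a1

/-- `B` is a 4-cycle sum of the graphs `Bi i` (with vertex sets `Si i`)
at the common conformal 4-cycle `a1 b1 a2 b2`. -/
def IsFourCycleSum {ℓ : ℕ} (B : SimpleGraph V) (Bi : Fin ℓ → SimpleGraph V)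
    (Si : Fin ℓ → Set V) (a1 b1 a2 b2 : V) : Prop :=
  (∀ i, EdgesWithin (Bi i) (Si i)) ∧
  (∀ i, IsC4In (Bi i) a1 b1 a2 b2) ∧
  (∀ i, ∃ M, IsPMOn (Bi i) (Si i \ C4verts a1 b1 a2 b2) M) ∧
  (∀ i j, i ≠ j → Si i ∩ Si j = C4verts a1 b1 a2 b2) ∧
  (⋃ i, Si i) = Set.univ ∧
  ∃ D ⊆ C4edges a1 b1 a2 b2, B.edgeSet = (⋃ i, (Bi i).edgeSet) \ D

/-- `B` is a maximal 4-cycle sum of the braces `Bi i` at the 4-cycle `a1 b1 a2 b2`. -/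
def IsMaxFourCycleSumOfBraces {ℓ : ℕ} (B : SimpleGraph V) (Bi : Fin ℓ → SimpleGraph V)
    (Si : Fin ℓ → Set V) (a1 b1 a2 b2 : V) : Prop :=
  IsFourCycleSum B Bi Si a1 b1 a2 b2 ∧ (∀ i, IsBraceOn (Bi i) (Si i)) ∧
    ¬ ∃ ℓ' : ℕ, ℓ < ℓ' ∧ ∃ (Hi : Fin ℓ' → SimpleGraph V) (Ti : Fin ℓ' → Set V),
      IsFourCycleSum B Hi Ti a1 b1 a2 b2 ∧ ∀ i, IsBraceOn (Hi i) (Ti i)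

/-- `∂(X)`: the set of edges of `G` with exactly one endpoint in `X`. -/
def edgeCut (G : SimpleGraph V) (X : Set V) : Set (Sym2 V) :=
  {e | e ∈ G.edgeSet ∧ ∃ x y : V, e = s(x, y) ∧ x ∈ X ∧ y ∉ X}

/-- `∂(X)` is a tight cut of the graph `G` with vertex set `S`. -/
def IsTightCutOn (G : SimpleGraph V) (S X : Set V) : Prop :=
  ∀ M, IsPMOn G S M → (edgeCut G X ∩ M).ncard = 1

def IsTightCut (G : SimpleGraph V) (X : Set V) : Prop :=
  IsTightCutOn G Set.univ X

/-- The minority of `X` with respect to the colour classes `V1`, `V2`. -/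
noncomputable def minority (V1 V2 X : Set V) : Set V :=
  if (X ∩ V1).ncard < (X ∩ V2).ncard then X ∩ V1 else X ∩ V2

/-- `P1` and `P2` are `M`-alternating paths of the same type. -/
def SameType (G : SimpleGraph V) (M : Set (Sym2 V)) {s1 t1 s2 t2 : V}
    (P1 : G.Walk s1 t1) (P2 : G.Walk s2 t2) : Prop :=
  (InternallyMConformal G M P1 ∧ InternallyMConformal G M P2) ∨
  (MConformalWalk G M P1 ∧ MConformalWalk G M P2) ∨
  ((¬ InternallyMConformal G M P1 ∧ ¬ MConformalWalk G M P1) ∧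
    (¬ InternallyMConformal G M P2 ∧ ¬ MConformalWalk G M P2))

/-- There is a strong matching cross over `C` in `(G, S)` w.r.t. colour classes `V1, V2`. -/
def HasStrongMatchingCrossOn (G : SimpleGraph V) (S V1 V2 : Set V) {c : V}
    (C : G.Walk c c) : Prop :=
  ∃ (M : Set (Sym2 V)) (s1 t1 s2 t2 : V) (P1 : G.Walk s1 t1) (P2 : G.Walk s2 t2),
    IsMatchingCrossOn G S C M P1 P2 ∧
    (V1 ∩ {s1, s2, t1, t2}).ncard = (V2 ∩ {s1, s2, t1, t2}).ncard ∧
    SameType G M P1 P2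

/-- `s1 s2 t1 t2` appear in this cyclic order on the 4-cycle `a1 b1 a2 b2`. -/
def CyclicOrderC4 (a1 b1 a2 b2 s1 s2 t1 t2 : V) : Prop :=
  ∃ n : ℕ, [s1, s2, t1, t2] = [a1, b1, a2, b2].rotate n ∨
    [s1, s2, t1, t2] = [b2, a2, b1, a1].rotate n

/-- `P1, P2` form a matching cross over the 4-cycle `a1 b1 a2 b2` w.r.t. `M`. -/
def IsCrossOverC4 (G : SimpleGraph V) (M : Set (Sym2 V)) (a1 b1 a2 b2 : V)
    {s1 t1 s2 t2 : V} (P1 : G.Walk s1 t1) (P2 : G.Walk s2 t2) : Prop :=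
  [s1, s2, t1, t2].Nodup ∧ CyclicOrderC4 a1 b1 a2 b2 s1 s2 t1 t2 ∧
    P1.IsPath ∧ P2.IsPath ∧ MAlternating G M P1 ∧ MAlternating G M P2 ∧
    (∀ z : V, z ∈ P1.support → z ∉ P2.support) ∧
    (∀ z ∈ P1.support, z ≠ s1 → z ≠ t1 → z ∉ C4verts a1 b1 a2 b2) ∧
    (∀ z ∈ P2.support, z ≠ s2 → z ≠ t2 → z ∉ C4verts a1 b1 a2 b2)

/-- The Heawood graph on `ZMod 14`. -/
def heawood : SimpleGraph (ZMod 14) :=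
  SimpleGraph.fromRel fun i j => j = i + 1 ∨ (Even i.val ∧ j = i + 5)

/-- The Rotunda: three cubes glued along a common 4-cycle whose edges are then deleted. -/
def rotunda : SimpleGraph (Fin 4 ⊕ Fin 3 × Fin 4) :=
  SimpleGraph.fromRel fun x y =>
    match x, y with
    | Sum.inl j, Sum.inr p => j = p.2
    | Sum.inr p, Sum.inr q => p.1 = q.1 ∧ q.2 = p.2 + 1
    | _, _ => False

/-- `F` is an `S`-cover in `G`. -/
def IsSCover (G : SimpleGraph V) (S : Set V) (F : Set (Sym2 V)) : Prop :=
  F ⊆ G.edgeSet ∧ (∀ e ∈ F, ∃ v ∈ S, v ∈ e) ∧ ∀ v ∈ S, ∃ e ∈ F, v ∈ e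

/-- `F` is contained in some perfect matching of `G`. -/
def Extendible (G : SimpleGraph V) (F : Set (Sym2 V)) : Prop :=
  ∃ M, IsPM G M ∧ F ⊆ M

/-- `(G, S)` is an `F`-instance of 2-MLP for `(a1, a2)` and `(b1, b2)`. -/
def TwoMLPInstanceOn (G : SimpleGraph V) (S : Set V) (a1 a2 b1 b2 : V)
    (F : Set (Sym2 V)) : Prop :=
  ∃ M, IsPMOn G S M ∧ F ⊆ M ∧
    ∃ (P1 : G.Walk a1 b1) (P2 : G.Walk a2 b2), P1.IsPath ∧ P2.IsPath ∧
      InternallyMConformal G M P1 ∧ InternallyMConformal G M P2 ∧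
      ∀ x : V, x ∈ P1.support → x ∉ P2.support

/-- `B − u − v + pq`: delete the vertices `u, v` and add the edge `pq`. -/
def deleteAdd (B : SimpleGraph V) (u v p q : V) : SimpleGraph V :=
  SimpleGraph.fromRel fun x y =>
    (B.Adj x y ∨ (x = p ∧ y = q)) ∧ x ≠ u ∧ x ≠ v ∧ y ≠ u ∧ y ≠ v

/-- `B` plus two new vertices `x = Sum.inr 0` and `y = Sum.inr 1` together with
the edges `xy, x b1, x b2, y a1, y a2`. -/
def plusXY (B : SimpleGraph V) (a1 a2 b1 b2 : V) : SimpleGraph (V ⊕ Fin 2) :=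
  SimpleGraph.fromRel fun p q =>
    (∃ a b : V, p = Sum.inl a ∧ q = Sum.inl b ∧ B.Adj a b) ∨
    (p = Sum.inr 0 ∧ q = Sum.inr 1) ∨
    (p = Sum.inr 0 ∧ (q = Sum.inl b1 ∨ q = Sum.inl b2)) ∨
    (p = Sum.inr 1 ∧ (q = Sum.inl a1 ∨ q = Sum.inl a2))

/-- The endpoints `q1, q2` (on the 4-cycle) belong to the same colour class. -/
def PrecrossDaring (V1 V2 : Set V) (q1 q2 : V) : Prop :=
  (q1 ∈ V1 ∧ q2 ∈ V1) ∨ (q1 ∈ V2 ∧ q2 ∈ V2)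

/-- `(P1, P2, Q, M)` is a diffuse `C'`-`M`-precross through the 4-cycle `a1 b1 a2 b2`
in the graph `G` with vertex set `S` and colour classes `V1, V2`. -/
def DiffusePrecross (G : SimpleGraph V) (S V1 V2 : Set V) (a1 b1 a2 b2 : V)
    {c p1 q1 p2 q2 x1 x2 : V} (C' : G.Walk c c) (M : Set (Sym2 V))
    (P1 : G.Walk p1 q1) (P2 : G.Walk p2 q2) (Q : G.Walk x1 x2) : Prop :=
  IsPMOn G S M ∧ P1.IsPath ∧ P2.IsPath ∧ Q.IsPath ∧
  MAlternating G M P1 ∧ MAlternating G M P2 ∧ MAlternating G M Q ∧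
  (∀ z : V, z ∈ P1.support → z ∉ P2.support) ∧
  (∀ z : V, z ∈ P1.support → z ∉ Q.support) ∧
  (∀ z : V, z ∈ P2.support → z ∉ Q.support) ∧
  (∀ z ∈ P1.support, z ≠ p1 → z ≠ q1 → z ∉ C'.support) ∧
  (∀ z ∈ P2.support, z ≠ p2 → z ≠ q2 → z ∉ C'.support) ∧
  (∀ z ∈ Q.support, z ≠ x1 → z ≠ x2 → z ∉ C'.support) ∧
  x1 ∈ C'.support ∧ x2 ∈ C'.support ∧
  p1 ∈ C'.support ∧ q1 ∈ C4verts a1 b1 a2 b2 ∧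
  p2 ∈ C'.support ∧ q2 ∈ C4verts a1 b1 a2 b2 ∧
  (∀ Wk : G.Walk p1 p2, (∀ e ∈ Wk.edges, e ∈ C'.edges) → ∃ z ∈ Wk.support, z ∈ Q.support) ∧
  (∀ U ∈ ({V1, V2} : Set (Set V)), (q1 ∈ U ∨ q2 ∈ U) →
    ∃ q : V, (q = q1 ∨ q = q2) ∧ q ∈ U ∧ ∃ e ∈ M, e ∈ C4edges a1 b1 a2 b2 ∧ q ∈ e)

/-- A daring diffuse precross is successful. -/
def PrecrossSuccessful (G : SimpleGraph V) (V1 V2 : Set V) (M : Set (Sym2 V))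
    {p1 q1 p2 q2 : V} (P1 : G.Walk p1 q1) (P2 : G.Walk p2 q2) : Prop :=
  PrecrossDaring V1 V2 q1 q2 ∧
  ((InternallyMConformal G M P1 ∧ MConformalWalk G M P2) ∨
   (InternallyMConformal G M P2 ∧ MConformalWalk G M P1) ∨
   (Even P1.length ∧ Even P2.length ∧
     ((∃ e ∈ M, e ∈ P1.edges ∧ p1 ∈ e) ↔ ¬ ∃ e ∈ M, e ∈ P2.edges ∧ p2 ∈ e)))


section Aux

variable {V : Type*}

lemma mem_support_of_edge {G : SimpleGraph V} {a b x : V} {p : G.Walk a b}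
    {e : Sym2 V} (he : e ∈ p.edges) (hx : x ∈ e) : x ∈ p.support := by
  induction e using Sym2.ind with
  | _ y z =>
    rcases Sym2.mem_iff.mp hx with rfl | rfl
    · exact p.fst_mem_support_of_mem_edges he
    · exact p.snd_mem_support_of_mem_edges he

lemma exists_edge_of_mem_support {G : SimpleGraph V} {a b x : V} (p : G.Walk a b)
    (hx : x ∈ p.support) : x = b ∨ ∃ e ∈ p.edges, x ∈ e := by
  induction p with
  | nil =>
    simp only [SimpleGraph.Walk.support_nil, List.mem_singleton] at hx
    exact Or.inl hx
  | @cons c d b h q ih =>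
    rw [SimpleGraph.Walk.support_cons] at hx
    rcases List.mem_cons.mp hx with rfl | hx'
    · exact Or.inr ⟨s(x, d), by simp, Sym2.mem_mk_left _ _⟩
    · rcases ih hx' with rfl | ⟨e, he, hxe⟩
      · exact Or.inl rfl
      · exact Or.inr ⟨e, by simp [he], hxe⟩

lemma pm_unique {G : SimpleGraph V} {S : Set V} {M : Set (Sym2 V)}
    (hM : IsPMOn G S M) {x : V} (hx : x ∈ S) {e f : Sym2 V}
    (he : e ∈ M) (hf : f ∈ M) (hxe : x ∈ e) (hxf : x ∈ f) : e = f := by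
  obtain ⟨g, -, hg⟩ := hM.2.2 x hx
  rw [hg e ⟨he, hxe⟩, hg f ⟨hf, hxf⟩]

lemma deleteAdd_edge {B : SimpleGraph V} {u v p q : V} {e : Sym2 V}
    (he : e ∈ (deleteAdd B u v p q).edgeSet) :
    (e ∈ B.edgeSet ∨ e = s(p, q)) ∧ ∀ x ∈ e, x ≠ u ∧ x ≠ v := by
  induction e using Sym2.ind with
  | _ x y =>
    rw [SimpleGraph.mem_edgeSet, deleteAdd, SimpleGraph.fromRel_adj] at he
    obtain ⟨hne, h | h⟩ := he
    · obtain ⟨hB | ⟨rfl, rfl⟩, h1, h2, h3, h4⟩ := h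
      · refine ⟨Or.inl ((SimpleGraph.mem_edgeSet _).mpr hB), fun z hz => ?_⟩
        rcases Sym2.mem_iff.mp hz with rfl | rfl
        exacts [⟨h1, h2⟩, ⟨h3, h4⟩]
      · refine ⟨Or.inr rfl, fun z hz => ?_⟩
        rcases Sym2.mem_iff.mp hz with rfl | rfl
        exacts [⟨h1, h2⟩, ⟨h3, h4⟩]
    · obtain ⟨hB | ⟨rfl, rfl⟩, h1, h2, h3, h4⟩ := h
      · refine ⟨Or.inl ((SimpleGraph.mem_edgeSet _).mpr hB.symm), fun z hz => ?_⟩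
        rcases Sym2.mem_iff.mp hz with rfl | rfl
        exacts [⟨h3, h4⟩, ⟨h1, h2⟩]
      · refine ⟨Or.inr (Sym2.eq_swap), fun z hz => ?_⟩
        rcases Sym2.mem_iff.mp hz with rfl | rfl
        exacts [⟨h3, h4⟩, ⟨h1, h2⟩]

lemma edge_mem_deleteAdd {B : SimpleGraph V} {u v p q : V} {e : Sym2 V}
    (he : e ∈ B.edgeSet) (hu : u ∉ e) (hv : v ∉ e) :
    e ∈ (deleteAdd B u v p q).edgeSet := by
  induction e using Sym2.ind with
  | _ x y =>
    rw [SimpleGraph.mem_edgeSet] at he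
    rw [SimpleGraph.mem_edgeSet, deleteAdd, SimpleGraph.fromRel_adj]
    simp only [Sym2.mem_iff, not_or] at hu hv
    exact ⟨he.ne, Or.inl ⟨Or.inl he, Ne.symm hu.1, Ne.symm hv.1, Ne.symm hu.2, Ne.symm hv.2⟩⟩

lemma new_edge_mem_deleteAdd {B : SimpleGraph V} {u v p q : V} (hpq : p ≠ q)
    (h1 : p ≠ u) (h2 : p ≠ v) (h3 : q ≠ u) (h4 : q ≠ v) :
    s(p, q) ∈ (deleteAdd B u v p q).edgeSet := by
  rw [SimpleGraph.mem_edgeSet, deleteAdd, SimpleGraph.fromRel_adj]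
  exact ⟨hpq, Or.inl ⟨Or.inr ⟨rfl, rfl⟩, h1, h2, h3, h4⟩⟩

lemma walkMConf_transfer {G H : SimpleGraph V} {M N : Set (Sym2 V)} {a b : V}
    (P : G.Walk a b) (hP : ∀ e ∈ P.edges, e ∈ H.edgeSet) (A : Set V)
    (hMN : ∀ e ∈ P.edges, e ∈ M ↔ e ∈ N)
    (h : WalkMConfOn G M P A) : WalkMConfOn H N (P.transfer H hP) A := by
  intro x hx
  obtain ⟨e, ⟨h1, h2, h3, h4⟩, hu⟩ := h x hx
  refine ⟨e, ⟨(hMN e h2).mp h1, by rw [SimpleGraph.Walk.edges_transfer]; exact h2, h3, h4⟩, ?_⟩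
  rintro f ⟨g1, g2, g3, g4⟩
  rw [SimpleGraph.Walk.edges_transfer] at g2
  exact hu f ⟨(hMN f g2).mpr g1, g2, g3, g4⟩

end Aux

/-- reduction of a size-four extendible cover to a size-three one. -/
theorem statement_10 {V : Type*} [Fintype V] [DecidableEq V] (B : SimpleGraph V)
    (V1 V2 : Set V) (hbip : IsBipartitionOf B V1 V2) (hpm : ∃ M, IsPM B M)
    (a1 a2 b1 b2 u v : V)
    (ha1 : a1 ∈ V1) (ha2 : a2 ∈ V1) (hb1 : b1 ∈ V2) (hb2 : b2 ∈ V2)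
    (hdist : [a1, a2, b1, b2].Nodup)
    (F : Set (Sym2 V))
    (hcover : IsSCover B {a1, a2, b1, b2} F) (hext : Extendible B F)
    (hcard : F.ncard = 4)
    (hu : u ∈ V2) (hu' : u ∉ ({a1, a2, b1, b2} : Set V))
    (hv : v ∈ V1) (hv' : v ∉ ({a1, a2, b1, b2} : Set V))
    (hue : s(u, a2) ∈ F) (hve : s(v, b1) ∈ F) :
    TwoMLPInstanceOn B Set.univ a1 a2 b1 b2 F ↔
      TwoMLPInstanceOn (deleteAdd B u v a2 b1) (Set.univ \ {u, v}) a1 a2 b1 b2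
        ((F \ {s(u, a2), s(v, b1)}) ∪ {s(a2, b1)}) := by
  classical
  -- distinctness facts
  have hdist' := hdist
  simp only [List.nodup_cons, List.mem_cons, List.mem_singleton, List.not_mem_nil,
    or_false, not_or, List.nodup_nil, and_true] at hdist'
  obtain ⟨⟨ha12, ha1b1, ha1b2⟩, ⟨ha2b1, ha2b2⟩, hb12⟩ := hdist'
  simp only [Set.mem_insert_iff, Set.mem_singleton_iff, not_or] at hu' hv'
  obtain ⟨hua1, hua2, hub1, hub2⟩ := hu'
  obtain ⟨hva1, hva2, hvb1', hvb2⟩ := hv'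
  have huv : u ≠ v := fun h => Set.disjoint_left.mp hbip.1 hv (h ▸ hu)
  have heua2 : s(u, a2) ∈ B.edgeSet := hcover.1 hue
  have hevb1 : s(v, b1) ∈ B.edgeSet := hcover.1 hve
  obtain ⟨N, hN, hFN⟩ := hext
  have ha2b1F : s(a2, b1) ∉ F := by
    intro h
    have heq : s(a2, b1) = s(u, a2) :=
      pm_unique hN (Set.mem_univ a2) (hFN h) (hFN hue)
        (Sym2.mem_mk_left _ _) (Sym2.mem_mk_right _ _)
    rw [Sym2.eq_iff] at heq
    rcases heq with ⟨h1, -⟩ | ⟨-, h2⟩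
    · exact hua2 h1.symm
    · exact hub1 h2.symm
  constructor
  · rintro ⟨M, hM, hFM, P1, P2, hP1, hP2, hc1, hc2, hdisjP⟩
    have hMua2 : s(u, a2) ∈ M := hFM hue
    have hMvb1 : s(v, b1) ∈ M := hFM hve
    have ha2P2 : a2 ∈ P2.support := P2.start_mem_support
    have hb1P1 : b1 ∈ P1.support := P1.end_mem_support
    have ha2P1 : a2 ∉ P1.support := fun h => hdisjP a2 h ha2P2
    have hb1P2 : b1 ∉ P2.support := fun h => hdisjP b1 hb1P1 h
    have huP1 : u ∉ P1.support := by
      intro h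
      obtain ⟨e, ⟨he1, he2, he3, he4⟩, -⟩ := hc1 u ⟨h, hua1, hub1⟩
      have heq : e = s(u, a2) :=
        pm_unique hM (Set.mem_univ u) he1 hMua2 he4 (Sym2.mem_mk_left _ _)
      rw [heq] at he3
      exact ha2P1 (he3 a2 (Sym2.mem_mk_right _ _)).1
    have huP2 : u ∉ P2.support := by
      intro h
      obtain ⟨e, ⟨he1, he2, he3, he4⟩, -⟩ := hc2 u ⟨h, hua2, hub2⟩
      have heq : e = s(u, a2) :=
        pm_unique hM (Set.mem_univ u) he1 hMua2 he4 (Sym2.mem_mk_left _ _)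
      rw [heq] at he3
      exact (he3 a2 (Sym2.mem_mk_right _ _)).2.1 rfl
    have hvP1 : v ∉ P1.support := by
      intro h
      obtain ⟨e, ⟨he1, he2, he3, he4⟩, -⟩ := hc1 v ⟨h, hva1, hvb1'⟩
      have heq : e = s(v, b1) :=
        pm_unique hM (Set.mem_univ v) he1 hMvb1 he4 (Sym2.mem_mk_left _ _)
      rw [heq] at he3
      exact (he3 b1 (Sym2.mem_mk_right _ _)).2.2 rfl
    have hvP2 : v ∉ P2.support := by
      intro h
      obtain ⟨e, ⟨he1, he2, he3, he4⟩, -⟩ := hc2 v ⟨h, hva2, hvb2⟩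
      have heq : e = s(v, b1) :=
        pm_unique hM (Set.mem_univ v) he1 hMvb1 he4 (Sym2.mem_mk_left _ _)
      rw [heq] at he3
      exact hb1P2 (he3 b1 (Sym2.mem_mk_right _ _)).1
    have hP1B' : ∀ e ∈ P1.edges, e ∈ (deleteAdd B u v a2 b1).edgeSet := by
      intro e he
      exact edge_mem_deleteAdd (P1.edges_subset_edgeSet he)
        (fun hx => huP1 (mem_support_of_edge he hx))
        (fun hx => hvP1 (mem_support_of_edge he hx))
    have hP2B' : ∀ e ∈ P2.edges, e ∈ (deleteAdd B u v a2 b1).edgeSet := by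
      intro e he
      exact edge_mem_deleteAdd (P2.edges_subset_edgeSet he)
        (fun hx => huP2 (mem_support_of_edge he hx))
        (fun hx => hvP2 (mem_support_of_edge he hx))
    set M' : Set (Sym2 V) := (M \ {s(u, a2), s(v, b1)}) ∪ {s(a2, b1)} with hM'def
    have hM'mem : ∀ e : Sym2 V,
        e ∈ M' ↔ (e ∈ M ∧ e ≠ s(u, a2) ∧ e ≠ s(v, b1)) ∨ e = s(a2, b1) := by
      intro e
      simp only [hM'def, Set.mem_union, Set.mem_diff, Set.mem_insert_iff,
        Set.mem_singleton_iff, not_or]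
      try tauto
    have hagree1 : ∀ e ∈ P1.edges, e ∈ M ↔ e ∈ M' := by
      intro e he
      have hue' : u ∉ e := fun hx => huP1 (mem_support_of_edge he hx)
      have hve' : v ∉ e := fun hx => hvP1 (mem_support_of_edge he hx)
      have ha2e : a2 ∉ e := fun hx => ha2P1 (mem_support_of_edge he hx)
      rw [hM'mem]
      constructor
      · intro h
        refine Or.inl ⟨h, ?_, ?_⟩ <;> rintro rfl
        · exact hue' (Sym2.mem_mk_left _ _)
        · exact hve' (Sym2.mem_mk_left _ _)
      · rintro (⟨h, -⟩ | rfl)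
        · exact h
        · exact absurd (Sym2.mem_mk_left _ _) ha2e
    have hagree2 : ∀ e ∈ P2.edges, e ∈ M ↔ e ∈ M' := by
      intro e he
      have hue' : u ∉ e := fun hx => huP2 (mem_support_of_edge he hx)
      have hve' : v ∉ e := fun hx => hvP2 (mem_support_of_edge he hx)
      have hb1e : b1 ∉ e := fun hx => hb1P2 (mem_support_of_edge he hx)
      rw [hM'mem]
      constructor
      · intro h
        refine Or.inl ⟨h, ?_, ?_⟩ <;> rintro rfl
        · exact hue' (Sym2.mem_mk_left _ _)
        · exact hve' (Sym2.mem_mk_left _ _)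
      · rintro (⟨h, -⟩ | rfl)
        · exact h
        · exact absurd (Sym2.mem_mk_right _ _) hb1e
    have hMuv : ∀ e ∈ M, e ≠ s(u, a2) → e ≠ s(v, b1) → u ∉ e ∧ v ∉ e := by
      intro e heM h1 h2
      constructor
      · intro hx
        exact h1 (pm_unique hM (Set.mem_univ u) heM hMua2 hx (Sym2.mem_mk_left _ _))
      · intro hx
        exact h2 (pm_unique hM (Set.mem_univ v) heM hMvb1 hx (Sym2.mem_mk_left _ _))
    have hM'pm : IsPMOn (deleteAdd B u v a2 b1) (Set.univ \ {u, v}) M' := by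
      refine ⟨?_, ?_, ?_⟩
      · intro e he
        rcases (hM'mem e).mp he with ⟨h1, h2, h3⟩ | rfl
        · obtain ⟨hu1, hv1⟩ := hMuv e h1 h2 h3
          exact edge_mem_deleteAdd (hM.1 e h1) hu1 hv1
        · exact new_edge_mem_deleteAdd ha2b1 (Ne.symm hua2) (Ne.symm hva2)
            (Ne.symm hub1) (Ne.symm hvb1')
      · intro e he y hy
        refine ⟨Set.mem_univ y, ?_⟩
        simp only [Set.mem_insert_iff, Set.mem_singleton_iff, not_or]
        rcases (hM'mem e).mp he with ⟨h1, h2, h3⟩ | rfl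
        · obtain ⟨hu1, hv1⟩ := hMuv e h1 h2 h3
          exact ⟨fun h => hu1 (h ▸ hy), fun h => hv1 (h ▸ hy)⟩
        · rcases Sym2.mem_iff.mp hy with rfl | rfl
          · exact ⟨Ne.symm hua2, Ne.symm hva2⟩
          · exact ⟨Ne.symm hub1, Ne.symm hvb1'⟩
      · rintro x ⟨-, hx⟩
        simp only [Set.mem_insert_iff, Set.mem_singleton_iff, not_or] at hx
        obtain ⟨hxu, hxv⟩ := hx
        by_cases hxa2 : x = a2
        · subst hxa2
          refine ⟨s(x, b1), ⟨(hM'mem _).mpr (Or.inr rfl), Sym2.mem_mk_left _ _⟩, ?_⟩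
          rintro f ⟨hf, hxf⟩
          rcases (hM'mem f).mp hf with ⟨h1, h2, -⟩ | rfl
          · exact absurd
              (pm_unique hM (Set.mem_univ x) h1 hMua2 hxf (Sym2.mem_mk_right _ _)) h2
          · rfl
        · by_cases hxb1 : x = b1
          · subst hxb1
            refine ⟨s(a2, x), ⟨(hM'mem _).mpr (Or.inr rfl), Sym2.mem_mk_right _ _⟩, ?_⟩
            rintro f ⟨hf, hxf⟩
            rcases (hM'mem f).mp hf with ⟨h1, -, h3⟩ | rfl
            · exact absurd
                (pm_unique hM (Set.mem_univ x) h1 hMvb1 hxf (Sym2.mem_mk_right _ _)) h3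
            · rfl
          · obtain ⟨e, ⟨heM, hxe⟩, huniq⟩ := hM.2.2 x (Set.mem_univ x)
            have he1 : e ≠ s(u, a2) := by
              intro h
              rcases Sym2.mem_iff.mp (h ▸ hxe) with rfl | rfl
              exacts [hxu rfl, hxa2 rfl]
            have he2 : e ≠ s(v, b1) := by
              intro h
              rcases Sym2.mem_iff.mp (h ▸ hxe) with rfl | rfl
              exacts [hxv rfl, hxb1 rfl]
            refine ⟨e, ⟨(hM'mem e).mpr (Or.inl ⟨heM, he1, he2⟩), hxe⟩, ?_⟩
            rintro f ⟨hf, hxf⟩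
            rcases (hM'mem f).mp hf with ⟨h1, -, -⟩ | rfl
            · exact huniq f ⟨h1, hxf⟩
            · rcases Sym2.mem_iff.mp hxf with rfl | rfl
              exacts [absurd rfl hxa2, absurd rfl hxb1]
    have hF'M' : (F \ {s(u, a2), s(v, b1)}) ∪ {s(a2, b1)} ⊆ M' := by
      rintro e (⟨heF, hne⟩ | he)
      · simp only [Set.mem_insert_iff, Set.mem_singleton_iff, not_or] at hne
        exact (hM'mem e).mpr (Or.inl ⟨hFM heF, hne.1, hne.2⟩)
      · exact (hM'mem e).mpr (Or.inr he)
    refine ⟨M', hM'pm, hF'M',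
      P1.transfer (deleteAdd B u v a2 b1) hP1B', P2.transfer (deleteAdd B u v a2 b1) hP2B',
      hP1.transfer hP1B', hP2.transfer hP2B', ?_, ?_, ?_⟩
    · unfold InternallyMConformal
      simp only [SimpleGraph.Walk.support_transfer]
      exact walkMConf_transfer P1 hP1B' _ hagree1 hc1
    · unfold InternallyMConformal
      simp only [SimpleGraph.Walk.support_transfer]
      exact walkMConf_transfer P2 hP2B' _ hagree2 hc2
    · intro x hx
      rw [SimpleGraph.Walk.support_transfer] at hx
      rw [SimpleGraph.Walk.support_transfer]
      exact hdisjP x hx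
  · rintro ⟨M', hM', hF'M', Q1, Q2, hQ1, hQ2, hc1, hc2, hdisjQ⟩
    have hMa2b1 : s(a2, b1) ∈ M' := hF'M' (Or.inr rfl)
    have ha2Q2 : a2 ∈ Q2.support := Q2.start_mem_support
    have hb1Q1 : b1 ∈ Q1.support := Q1.end_mem_support
    have ha2Q1 : a2 ∉ Q1.support := fun h => hdisjQ a2 h ha2Q2
    have hb1Q2 : b1 ∉ Q2.support := fun h => hdisjQ b1 hb1Q1 h
    have hnotuv : ∀ (a b : V) (p : (deleteAdd B u v a2 b1).Walk a b) (x : V),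
        x ∈ p.support → x = b ∨ (x ≠ u ∧ x ≠ v) := by
      intro a b p x hx
      rcases exists_edge_of_mem_support p hx with rfl | ⟨e, he, hxe⟩
      · exact Or.inl rfl
      · exact Or.inr ((deleteAdd_edge (p.edges_subset_edgeSet he)).2 x hxe)
    have huQ1 : u ∉ Q1.support := by
      intro h
      rcases hnotuv _ _ Q1 u h with heq | ⟨h1, -⟩
      exacts [hub1 heq, h1 rfl]
    have hvQ1 : v ∉ Q1.support := by
      intro h
      rcases hnotuv _ _ Q1 v h with heq | ⟨-, h2⟩
      exacts [hvb1' heq, h2 rfl]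
    have huQ2 : u ∉ Q2.support := by
      intro h
      rcases hnotuv _ _ Q2 u h with heq | ⟨h1, -⟩
      exacts [hub2 heq, h1 rfl]
    have hvQ2 : v ∉ Q2.support := by
      intro h
      rcases hnotuv _ _ Q2 v h with heq | ⟨-, h2⟩
      exacts [hvb2 heq, h2 rfl]
    have hQ1B : ∀ e ∈ Q1.edges, e ∈ B.edgeSet := by
      intro e he
      rcases (deleteAdd_edge (Q1.edges_subset_edgeSet he)).1 with h | rfl
      · exact h
      · exact absurd (mem_support_of_edge he (Sym2.mem_mk_left _ _)) ha2Q1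
    have hQ2B : ∀ e ∈ Q2.edges, e ∈ B.edgeSet := by
      intro e he
      rcases (deleteAdd_edge (Q2.edges_subset_edgeSet he)).1 with h | rfl
      · exact h
      · exact absurd (mem_support_of_edge he (Sym2.mem_mk_right _ _)) hb1Q2
    set M : Set (Sym2 V) := (M' \ {s(a2, b1)}) ∪ {s(u, a2), s(v, b1)} with hMdef
    have hMmem : ∀ e : Sym2 V,
        e ∈ M ↔ (e ∈ M' ∧ e ≠ s(a2, b1)) ∨ e = s(u, a2) ∨ e = s(v, b1) := by
      intro e
      simp only [hMdef, Set.mem_union, Set.mem_diff, Set.mem_insert_iff,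
        Set.mem_singleton_iff]
      try tauto
    have hM'uv : ∀ e ∈ M', u ∉ e ∧ v ∉ e := by
      intro e he
      constructor
      · intro hx
        exact (hM'.2.1 e he u hx).2 (Set.mem_insert _ _)
      · intro hx
        exact (hM'.2.1 e he v hx).2 (Set.mem_insert_iff.mpr (Or.inr rfl))
    have hagree1 : ∀ e ∈ Q1.edges, e ∈ M' ↔ e ∈ M := by
      intro e he
      have hue' : u ∉ e := fun hx => huQ1 (mem_support_of_edge he hx)
      have hve' : v ∉ e := fun hx => hvQ1 (mem_support_of_edge he hx)
      have ha2e : a2 ∉ e := fun hx => ha2Q1 (mem_support_of_edge he hx)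
      rw [hMmem]
      constructor
      · intro h
        refine Or.inl ⟨h, ?_⟩
        rintro rfl
        exact ha2e (Sym2.mem_mk_left _ _)
      · rintro (⟨h, -⟩ | rfl | rfl)
        · exact h
        · exact absurd (Sym2.mem_mk_left _ _) hue'
        · exact absurd (Sym2.mem_mk_left _ _) hve'
    have hagree2 : ∀ e ∈ Q2.edges, e ∈ M' ↔ e ∈ M := by
      intro e he
      have hue' : u ∉ e := fun hx => huQ2 (mem_support_of_edge he hx)
      have hve' : v ∉ e := fun hx => hvQ2 (mem_support_of_edge he hx)
      have hb1e : b1 ∉ e := fun hx => hb1Q2 (mem_support_of_edge he hx)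
      rw [hMmem]
      constructor
      · intro h
        refine Or.inl ⟨h, ?_⟩
        rintro rfl
        exact hb1e (Sym2.mem_mk_right _ _)
      · rintro (⟨h, -⟩ | rfl | rfl)
        · exact h
        · exact absurd (Sym2.mem_mk_left _ _) hue'
        · exact absurd (Sym2.mem_mk_left _ _) hve'
    have hmemS : ∀ x : V, x ≠ u → x ≠ v → x ∈ (Set.univ \ {u, v} : Set V) := by
      intro x h1 h2
      refine ⟨Set.mem_univ x, ?_⟩
      simp only [Set.mem_insert_iff, Set.mem_singleton_iff, not_or]
      exact ⟨h1, h2⟩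
    have hMpm : IsPMOn B Set.univ M := by
      refine ⟨?_, fun e _ y _ => Set.mem_univ y, ?_⟩
      · intro e he
        rcases (hMmem e).mp he with ⟨h1, h2⟩ | rfl | rfl
        · rcases (deleteAdd_edge (hM'.1 e h1)).1 with h | h
          · exact h
          · exact absurd h h2
        · exact heua2
        · exact hevb1
      · intro x _
        by_cases hxu : x = u
        · subst hxu
          refine ⟨s(x, a2), ⟨(hMmem _).mpr (Or.inr (Or.inl rfl)), Sym2.mem_mk_left _ _⟩, ?_⟩
          rintro f ⟨hf, hxf⟩
          rcases (hMmem f).mp hf with ⟨h1, -⟩ | rfl | rfl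
          · exact absurd hxf (hM'uv f h1).1
          · rfl
          · rcases Sym2.mem_iff.mp hxf with rfl | rfl
            exacts [absurd rfl huv, absurd rfl hub1]
        · by_cases hxv : x = v
          · subst hxv
            refine ⟨s(x, b1), ⟨(hMmem _).mpr (Or.inr (Or.inr rfl)), Sym2.mem_mk_left _ _⟩, ?_⟩
            rintro f ⟨hf, hxf⟩
            rcases (hMmem f).mp hf with ⟨h1, -⟩ | rfl | rfl
            · exact absurd hxf (hM'uv f h1).2
            · rcases Sym2.mem_iff.mp hxf with rfl | rfl
              exacts [absurd rfl (Ne.symm huv), absurd rfl hva2]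
            · rfl
          · by_cases hxa2 : x = a2
            · subst hxa2
              refine ⟨s(u, x), ⟨(hMmem _).mpr (Or.inr (Or.inl rfl)), Sym2.mem_mk_right _ _⟩, ?_⟩
              rintro f ⟨hf, hxf⟩
              rcases (hMmem f).mp hf with ⟨h1, h2⟩ | rfl | rfl
              · exact absurd (pm_unique hM' (hmemS x hxu hxv) h1 hMa2b1 hxf
                  (Sym2.mem_mk_left _ _)) h2
              · rfl
              · rcases Sym2.mem_iff.mp hxf with rfl | rfl
                exacts [absurd rfl (Ne.symm hva2), absurd rfl ha2b1]
            · by_cases hxb1 : x = b1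
              · subst hxb1
                refine ⟨s(v, x), ⟨(hMmem _).mpr (Or.inr (Or.inr rfl)), Sym2.mem_mk_right _ _⟩, ?_⟩
                rintro f ⟨hf, hxf⟩
                rcases (hMmem f).mp hf with ⟨h1, h2⟩ | rfl | rfl
                · exact absurd (pm_unique hM' (hmemS x hxu hxv) h1 hMa2b1 hxf
                    (Sym2.mem_mk_right _ _)) h2
                · rcases Sym2.mem_iff.mp hxf with rfl | rfl
                  exacts [absurd rfl (Ne.symm hub1), absurd rfl (Ne.symm ha2b1)]
                · rfl
              · obtain ⟨e, ⟨heM', hxe⟩, huniq⟩ := hM'.2.2 x (hmemS x hxu hxv)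
                have hne : e ≠ s(a2, b1) := by
                  intro h
                  rcases Sym2.mem_iff.mp (h ▸ hxe) with rfl | rfl
                  exacts [hxa2 rfl, hxb1 rfl]
                refine ⟨e, ⟨(hMmem e).mpr (Or.inl ⟨heM', hne⟩), hxe⟩, ?_⟩
                rintro f ⟨hf, hxf⟩
                rcases (hMmem f).mp hf with ⟨h1, -⟩ | rfl | rfl
                · exact huniq f ⟨h1, hxf⟩
                · rcases Sym2.mem_iff.mp hxf with rfl | rfl
                  exacts [absurd rfl hxu, absurd rfl hxa2]
                · rcases Sym2.mem_iff.mp hxf with rfl | rfl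
                  exacts [absurd rfl hxv, absurd rfl hxb1]
    have hFM : F ⊆ M := by
      intro e heF
      by_cases h1 : e = s(u, a2)
      · exact (hMmem e).mpr (Or.inr (Or.inl h1))
      · by_cases h2 : e = s(v, b1)
        · exact (hMmem e).mpr (Or.inr (Or.inr h2))
        · have heM' : e ∈ M' := hF'M' (Or.inl ⟨heF, by
            simp only [Set.mem_insert_iff, Set.mem_singleton_iff, not_or]
            exact ⟨h1, h2⟩⟩)
          have hne : e ≠ s(a2, b1) := fun h => ha2b1F (h ▸ heF)
          exact (hMmem e).mpr (Or.inl ⟨heM', hne⟩)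
    refine ⟨M, hMpm, hFM, Q1.transfer B hQ1B, Q2.transfer B hQ2B,
      hQ1.transfer hQ1B, hQ2.transfer hQ2B, ?_, ?_, ?_⟩
    · unfold InternallyMConformal
      simp only [SimpleGraph.Walk.support_transfer]
      exact walkMConf_transfer Q1 hQ1B _ hagree1 hc1
    · unfold InternallyMConformal
      simp only [SimpleGraph.Walk.support_transfer]
      exact walkMConf_transfer Q2 hQ2B _ hagree2 hc2
    · intro x hx
      rw [SimpleGraph.Walk.support_transfer] at hx
      rw [SimpleGraph.Walk.support_transfer]
      exact hdisjQ x hx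


end Paper
end

section
/- Let B be a bipartite graph with a perfect matching, let a1, a2 ∈ V1 and b1, b2 ∈ V2 be four distinct vertices, S = {a1, a2, b1, b2}, and let F = {u a1, v b2, a2b1} be an extendible S-cover of size three (so u ∈ V2 ∖ S, v ∈ V1 ∖ S, and a2b1 ∈ E(B)). Let B' = B − u − v + a1b2 be the graph obtained from B by deleting u and v and adding the edge a1b2, and let F' = {a1b2, a2b1}. Then B is an F-instance of 2-MLP for (a1, a2) and (b1, b2) if and only if B' is an F'-instance of 2-MLP for (a1, a2) and (b1, b2). -/
namespace Paper

open SimpleGraph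

variable {V : Type*} {W : Type*}

lemma deleteAdd_adj_iff {B : SimpleGraph V} {u v p q x y : V} :
    (deleteAdd B u v p q).Adj x y ↔
      x ≠ y ∧ x ≠ u ∧ x ≠ v ∧ y ≠ u ∧ y ≠ v ∧
        (B.Adj x y ∨ (x = p ∧ y = q) ∨ (x = q ∧ y = p)) := by
  simp only [deleteAdd, fromRel_adj]
  constructor
  · rintro ⟨hxy, h | h⟩
    · exact ⟨hxy, h.2.1, h.2.2.1, h.2.2.2.1, h.2.2.2.2,
        h.1.elim Or.inl (fun h => Or.inr (Or.inl h))⟩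
    · exact ⟨hxy, h.2.2.2.1, h.2.2.2.2, h.2.1, h.2.2.1,
        h.1.elim (fun h => Or.inl h.symm) (fun h => Or.inr (Or.inr ⟨h.2, h.1⟩))⟩
  · rintro ⟨hxy, hxu, hxv, hyu, hyv, h | h | h⟩
    · exact ⟨hxy, Or.inl ⟨Or.inl h, hxu, hxv, hyu, hyv⟩⟩
    · exact ⟨hxy, Or.inl ⟨Or.inr h, hxu, hxv, hyu, hyv⟩⟩
    · exact ⟨hxy, Or.inr ⟨Or.inr ⟨h.2, h.1⟩, hyu, hyv, hxu, hxv⟩⟩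

lemma mem_support_of_mem_edge {G : SimpleGraph V} {a b : V} (p : G.Walk a b) {e : Sym2 V}
    (he : e ∈ p.edges) {y : V} (hy : y ∈ e) : y ∈ p.support := by
  induction e using Sym2.ind with
  | _ x z =>
    rcases Sym2.mem_iff.mp hy with rfl | rfl
    · exact p.fst_mem_support_of_mem_edges he
    · exact p.snd_mem_support_of_mem_edges he

lemma support_avoid {G : SimpleGraph V} {s t w : V} (W : G.Walk s t)
    (hadj : ∀ x y : V, G.Adj x y → x ≠ w) (ht : t ≠ w) : ∀ z ∈ W.support, z ≠ w := by
  induction W with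
  | nil => intro z hz; rw [SimpleGraph.Walk.support_nil, List.mem_singleton] at hz
           subst hz; exact ht
  | cons h p ih =>
    intro z hz
    rw [SimpleGraph.Walk.support_cons] at hz
    rcases List.mem_cons.mp hz with rfl | hz
    · exact hadj _ _ h
    · exact ih ht z hz

lemma pm_unique_edge {G : SimpleGraph V} {S : Set V} {M : Set (Sym2 V)} {w z : V}
    (hpm : IsPMOn G S M) (hw : w ∈ S) (he : s(w, z) ∈ M) :
    ∀ e ∈ M, w ∈ e → e = s(w, z) := by
  obtain ⟨f, _, huniq⟩ := hpm.2.2 w hw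
  intro e heM hwe
  rw [huniq e ⟨heM, hwe⟩, huniq s(w, z) ⟨he, Sym2.mem_mk_left _ _⟩]

lemma not_mem_support_of_pm {G : SimpleGraph V} {M : Set (Sym2 V)} {a b w z : V}
    {P : G.Walk a b} (hconf : InternallyMConformal G M P)
    (hun : ∀ e ∈ M, w ∈ e → e = s(w, z))
    (hwa : w ≠ a) (hwb : w ≠ b)
    (hz : ¬ (z ∈ P.support ∧ z ≠ a ∧ z ≠ b)) : w ∉ P.support := by
  intro hw
  obtain ⟨e, ⟨heM, _, hey, hwe⟩, _⟩ := hconf w ⟨hw, hwa, hwb⟩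
  have he : e = s(w, z) := hun e heM hwe
  exact hz (hey z (by rw [he]; exact Sym2.mem_mk_right _ _))

lemma walkMConfOn_transfer {G G' : SimpleGraph V} {M M' : Set (Sym2 V)}
    {a b : V} {P : G.Walk a b} (hP : ∀ e ∈ P.edges, e ∈ G'.edgeSet) (A : Set V)
    (hc : WalkMConfOn G M P A)
    (h1 : ∀ e ∈ M, e ∈ P.edges → (∀ y ∈ e, y ∈ A) → e ∈ M')
    (h2 : ∀ e ∈ M', e ∈ P.edges → (∀ y ∈ e, y ∈ A) → e ∈ M) :
    WalkMConfOn G' M' (P.transfer G' hP) A := by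
  intro x hx
  obtain ⟨e, ⟨heM, hee, hey, hxe⟩, huniq⟩ := hc x hx
  refine ⟨e, ⟨h1 e heM hee hey, by rwa [SimpleGraph.Walk.edges_transfer], hey, hxe⟩, ?_⟩
  rintro f ⟨hfM, hfe, hfy, hxf⟩
  rw [SimpleGraph.Walk.edges_transfer] at hfe
  exact huniq f ⟨h2 f hfM hfe hfy, hfe, hfy, hxf⟩

lemma internallyMConformal_transfer {G G' : SimpleGraph V} {M M' : Set (Sym2 V)}
    {a b : V} {P : G.Walk a b} (hP : ∀ e ∈ P.edges, e ∈ G'.edgeSet)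
    (hc : InternallyMConformal G M P)
    (h1 : ∀ e ∈ M, e ∈ P.edges →
      (∀ y ∈ e, y ∈ P.support ∧ y ≠ a ∧ y ≠ b) → e ∈ M')
    (h2 : ∀ e ∈ M', e ∈ P.edges →
      (∀ y ∈ e, y ∈ P.support ∧ y ≠ a ∧ y ≠ b) → e ∈ M) :
    InternallyMConformal G' M' (P.transfer G' hP) := by
  have hA : {x | x ∈ (P.transfer G' hP).support ∧ x ≠ a ∧ x ≠ b}
      = {x | x ∈ P.support ∧ x ≠ a ∧ x ≠ b} := by
    ext x; simp [SimpleGraph.Walk.support_transfer]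
  unfold InternallyMConformal
  rw [hA]
  exact walkMConfOn_transfer hP _ hc h1 h2

/-- reduction of a size-three extendible cover to a size-two one. -/
theorem statement_11 {V : Type*} [Fintype V] [DecidableEq V] (B : SimpleGraph V)
    (V1 V2 : Set V) (hbip : IsBipartitionOf B V1 V2) (hpm : ∃ M, IsPM B M)
    (a1 a2 b1 b2 u v : V)
    (ha1 : a1 ∈ V1) (ha2 : a2 ∈ V1) (hb1 : b1 ∈ V2) (hb2 : b2 ∈ V2)
    (hdist : [a1, a2, b1, b2].Nodup)
    (hcover : IsSCover B {a1, a2, b1, b2} ({s(u, a1), s(v, b2), s(a2, b1)} : Set (Sym2 V)))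
    (hext : Extendible B ({s(u, a1), s(v, b2), s(a2, b1)} : Set (Sym2 V)))
    (hcard : ({s(u, a1), s(v, b2), s(a2, b1)} : Set (Sym2 V)).ncard = 3)
    (hu : u ∈ V2) (hu' : u ∉ ({a1, a2, b1, b2} : Set V))
    (hv : v ∈ V1) (hv' : v ∉ ({a1, a2, b1, b2} : Set V))
    (ha2b1 : B.Adj a2 b1) :
    TwoMLPInstanceOn B Set.univ a1 a2 b1 b2 {s(u, a1), s(v, b2), s(a2, b1)} ↔
      TwoMLPInstanceOn (deleteAdd B u v a1 b2) (Set.univ \ {u, v}) a1 a2 b1 b2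
        ({s(a1, b2), s(a2, b1)} : Set (Sym2 V)) := by
  -- distinctness facts
  simp only [List.nodup_cons, List.mem_cons, List.mem_singleton, List.not_mem_nil,
    or_false, List.nodup_nil, and_true, not_or] at hdist
  obtain ⟨⟨h12, h1b1, h1b2⟩, ⟨h2b1, h2b2⟩, hb12⟩ := hdist
  simp only [Set.mem_insert_iff, Set.mem_singleton_iff, not_or] at hu' hv'
  obtain ⟨hua1, hua2, hub1, hub2⟩ := hu'
  obtain ⟨hva1, hva2, hvb1, hvb2⟩ := hv'
  have huv : u ≠ v := fun h => Set.disjoint_right.mp hbip.1 hu (h ▸ hv)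
  have hBadj : ∀ x y : V, (deleteAdd B u v a1 b2).Adj x y → x ≠ u ∧ x ≠ v :=
    fun x y h => ⟨(deleteAdd_adj_iff.mp h).2.1, (deleteAdd_adj_iff.mp h).2.2.1⟩
  constructor
  · rintro ⟨M, hpmM, hFM, P1, P2, hP1, hP2, hc1, hc2, hdisj⟩
    have hMua1 : s(u, a1) ∈ M := hFM (by simp)
    have hMvb2 : s(v, b2) ∈ M := hFM (by simp)
    have hMa2b1 : s(a2, b1) ∈ M := hFM (by simp)
    have hunu : ∀ e ∈ M, u ∈ e → e = s(u, a1) :=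
      pm_unique_edge hpmM (Set.mem_univ u) hMua1
    have hunv : ∀ e ∈ M, v ∈ e → e = s(v, b2) :=
      pm_unique_edge hpmM (Set.mem_univ v) hMvb2
    have huna1 : ∀ e ∈ M, a1 ∈ e → e = s(a1, u) :=
      pm_unique_edge hpmM (Set.mem_univ a1) (Sym2.eq_swap ▸ hMua1)
    have hunb2 : ∀ e ∈ M, b2 ∈ e → e = s(b2, v) :=
      pm_unique_edge hpmM (Set.mem_univ b2) (Sym2.eq_swap ▸ hMvb2)
    have hb2P1 : b2 ∉ P1.support := fun h => hdisj b2 h P2.end_mem_support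
    have ha1P2 : a1 ∉ P2.support := fun h => hdisj a1 P1.start_mem_support h
    have huP1 : u ∉ P1.support :=
      not_mem_support_of_pm hc1 hunu hua1 hub1 (fun h => h.2.1 rfl)
    have hvP1 : v ∉ P1.support :=
      not_mem_support_of_pm hc1 hunv hva1 hvb1 (fun h => hb2P1 h.1)
    have huP2 : u ∉ P2.support :=
      not_mem_support_of_pm hc2 hunu hua2 hub2 (fun h => ha1P2 h.1)
    have hvP2 : v ∉ P2.support :=
      not_mem_support_of_pm hc2 hunv hva2 hvb2 (fun h => h.2.2 rfl)
    have hedge : ∀ (s t : V) (P : B.Walk s t), u ∉ P.support → v ∉ P.support →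
        ∀ e ∈ P.edges, e ∈ (deleteAdd B u v a1 b2).edgeSet := by
      intro s t P hu0 hv0 e he
      induction e using Sym2.ind with
      | _ x y =>
        have hadj : B.Adj x y := P.edges_subset_edgeSet he
        have hx : x ∈ P.support := P.fst_mem_support_of_mem_edges he
        have hy : y ∈ P.support := P.snd_mem_support_of_mem_edges he
        rw [SimpleGraph.mem_edgeSet, deleteAdd_adj_iff]
        exact ⟨hadj.ne, fun h => hu0 (h ▸ hx), fun h => hv0 (h ▸ hx),
          fun h => hu0 (h ▸ hy), fun h => hv0 (h ▸ hy), Or.inl hadj⟩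
    have hedge1 := hedge a1 b1 P1 huP1 hvP1
    have hedge2 := hedge a2 b2 P2 huP2 hvP2
    set M' : Set (Sym2 V) := insert s(a1, b2) (M \ {s(u, a1), s(v, b2)}) with hM'
    have hM'prop : ∀ e ∈ M \ ({s(u, a1), s(v, b2)} : Set (Sym2 V)), u ∉ e ∧ v ∉ e := by
      rintro e ⟨heM, hne⟩
      simp only [Set.mem_insert_iff, Set.mem_singleton_iff, not_or] at hne
      exact ⟨fun h => hne.1 (hunu e heM h), fun h => hne.2 (hunv e heM h)⟩
    have hpm' : IsPMOn (deleteAdd B u v a1 b2) (Set.univ \ {u, v}) M' := by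
      refine ⟨?_, ?_, ?_⟩
      · intro e he
        rcases he with rfl | ⟨heM, hne⟩
        · rw [SimpleGraph.mem_edgeSet, deleteAdd_adj_iff]
          exact ⟨h1b2, fun h => hua1 h.symm, fun h => hva1 h.symm,
            fun h => hub2 h.symm, fun h => hvb2 h.symm, Or.inr (Or.inl ⟨rfl, rfl⟩)⟩
        · have h1 := hM'prop e ⟨heM, hne⟩
          have h2 : e ∈ B.edgeSet := hpmM.1 e heM
          induction e using Sym2.ind with
          | _ x y =>
            rw [SimpleGraph.mem_edgeSet] at h2 ⊢
            rw [deleteAdd_adj_iff]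
            refine ⟨h2.ne, ?_, ?_, ?_, ?_, Or.inl h2⟩
            · exact fun h => h1.1 (by rw [← h]; exact Sym2.mem_mk_left _ _)
            · exact fun h => h1.2 (by rw [← h]; exact Sym2.mem_mk_left _ _)
            · exact fun h => h1.1 (by rw [← h]; exact Sym2.mem_mk_right _ _)
            · exact fun h => h1.2 (by rw [← h]; exact Sym2.mem_mk_right _ _)
      · intro e he y hy
        refine ⟨Set.mem_univ y, ?_⟩
        simp only [Set.mem_insert_iff, Set.mem_singleton_iff, not_or]
        rcases he with rfl | he
        · rcases Sym2.mem_iff.mp hy with rfl | rfl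
          · exact ⟨fun h => hua1 h.symm, fun h => hva1 h.symm⟩
          · exact ⟨fun h => hub2 h.symm, fun h => hvb2 h.symm⟩
        · have h1 := hM'prop e he
          exact ⟨fun h => h1.1 (h ▸ hy), fun h => h1.2 (h ▸ hy)⟩
      · rintro x ⟨-, hx⟩
        simp only [Set.mem_insert_iff, Set.mem_singleton_iff, not_or] at hx
        by_cases hxa : x = a1 ∨ x = b2
        · refine ⟨s(a1, b2), ⟨Set.mem_insert _ _, ?_⟩, ?_⟩
          · rcases hxa with rfl | rfl
            · exact Sym2.mem_mk_left _ _
            · exact Sym2.mem_mk_right _ _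
          · rintro f ⟨hf, hxf⟩
            rcases hf with rfl | ⟨hfM, hfne⟩
            · rfl
            · exfalso
              simp only [Set.mem_insert_iff, Set.mem_singleton_iff, not_or] at hfne
              rcases hxa with rfl | rfl
              · exact hfne.1 ((huna1 f hfM hxf).trans Sym2.eq_swap)
              · exact hfne.2 ((hunb2 f hfM hxf).trans Sym2.eq_swap)
        · push_neg at hxa
          obtain ⟨e, ⟨heM, hxe⟩, hequniq⟩ := hpmM.2.2 x (Set.mem_univ x)
          have heu : e ≠ s(u, a1) := by
            rintro rfl
            rcases Sym2.mem_iff.mp hxe with rfl | rfl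
            exacts [hx.1 rfl, hxa.1 rfl]
          have hev : e ≠ s(v, b2) := by
            rintro rfl
            rcases Sym2.mem_iff.mp hxe with rfl | rfl
            exacts [hx.2 rfl, hxa.2 rfl]
          refine ⟨e, ⟨Set.mem_insert_of_mem _ ⟨heM, by
            simp only [Set.mem_insert_iff, Set.mem_singleton_iff, not_or]
            exact ⟨heu, hev⟩⟩, hxe⟩, ?_⟩
          rintro f ⟨hf, hxf⟩
          rcases hf with rfl | ⟨hfM, -⟩
          · exfalso
            rcases Sym2.mem_iff.mp hxf with rfl | rfl
            exacts [hxa.1 rfl, hxa.2 rfl]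
          · exact hequniq f ⟨hfM, hxf⟩
    have hF' : ({s(a1, b2), s(a2, b1)} : Set (Sym2 V)) ⊆ M' := by
      rintro e (rfl | rfl)
      · exact Set.mem_insert _ _
      · refine Set.mem_insert_of_mem _ ⟨hMa2b1, ?_⟩
        simp only [Set.mem_insert_iff, Set.mem_singleton_iff, not_or]
        constructor
        · intro h
          rcases Sym2.eq_iff.mp h with ⟨h1, -⟩ | ⟨h1, -⟩
          exacts [hua2 h1.symm, h12 h1.symm]
        · intro h
          rcases Sym2.eq_iff.mp h with ⟨h1, -⟩ | ⟨h1, -⟩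
          exacts [hva2 h1.symm, h2b2 h1]
    refine ⟨M', hpm', hF', P1.transfer _ hedge1, P2.transfer _ hedge2,
      hP1.transfer _, hP2.transfer _,
      internallyMConformal_transfer hedge1 hc1 ?_ ?_,
      internallyMConformal_transfer hedge2 hc2 ?_ ?_, ?_⟩
    · intro e heM hee hey
      refine Set.mem_insert_of_mem _ ⟨heM, ?_⟩
      simp only [Set.mem_insert_iff, Set.mem_singleton_iff, not_or]
      constructor
      · rintro rfl
        exact (hey a1 (Sym2.mem_mk_right _ _)).2.1 rfl
      · rintro rfl
        exact hb2P1 (hey b2 (Sym2.mem_mk_right _ _)).1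
    · intro e heM' hee hey
      rcases heM' with rfl | ⟨heM, -⟩
      · exact absurd rfl (hey a1 (Sym2.mem_mk_left _ _)).2.1
      · exact heM
    · intro e heM hee hey
      refine Set.mem_insert_of_mem _ ⟨heM, ?_⟩
      simp only [Set.mem_insert_iff, Set.mem_singleton_iff, not_or]
      constructor
      · rintro rfl
        exact ha1P2 (hey a1 (Sym2.mem_mk_right _ _)).1
      · rintro rfl
        exact (hey b2 (Sym2.mem_mk_right _ _)).2.2 rfl
    · intro e heM' hee hey
      rcases heM' with rfl | ⟨heM, -⟩
      · exact absurd (hey a1 (Sym2.mem_mk_left _ _)).1 ha1P2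
      · exact heM
    · intro x hx1 hx2
      rw [SimpleGraph.Walk.support_transfer] at hx1 hx2
      exact hdisj x hx1 hx2
  · rintro ⟨M', hpm', hFM', Q1, Q2, hQ1, hQ2, hc1, hc2, hdisj⟩
    have hM'a1b2 : s(a1, b2) ∈ M' := hFM' (by simp)
    have hM'a2b1 : s(a2, b1) ∈ M' := hFM' (by simp)
    have hM'avoid : ∀ e ∈ M', ∀ y ∈ e, y ≠ u ∧ y ≠ v := by
      intro e he y hy
      have := hpm'.2.1 e he y hy
      simp only [Set.mem_diff, Set.mem_insert_iff, Set.mem_singleton_iff, not_or] at this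
      exact this.2
    have ha1uv : a1 ∈ Set.univ \ ({u, v} : Set V) := by
      refine ⟨Set.mem_univ _, ?_⟩
      simp only [Set.mem_insert_iff, Set.mem_singleton_iff, not_or]
      exact ⟨fun h => hua1 h.symm, fun h => hva1 h.symm⟩
    have hb2uv : b2 ∈ Set.univ \ ({u, v} : Set V) := by
      refine ⟨Set.mem_univ _, ?_⟩
      simp only [Set.mem_insert_iff, Set.mem_singleton_iff, not_or]
      exact ⟨fun h => hub2 h.symm, fun h => hvb2 h.symm⟩
    have huna1' : ∀ e ∈ M', a1 ∈ e → e = s(a1, b2) :=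
      pm_unique_edge hpm' ha1uv hM'a1b2
    have hunb2' : ∀ e ∈ M', b2 ∈ e → e = s(b2, a1) :=
      pm_unique_edge hpm' hb2uv (Sym2.eq_swap ▸ hM'a1b2)
    have huQ1 : u ∉ Q1.support := fun h =>
      support_avoid Q1 (fun x y hxy => (hBadj x y hxy).1) (Ne.symm hub1) u h rfl
    have hvQ1 : v ∉ Q1.support := fun h =>
      support_avoid Q1 (fun x y hxy => (hBadj x y hxy).2) (Ne.symm hvb1) v h rfl
    have huQ2 : u ∉ Q2.support := fun h =>
      support_avoid Q2 (fun x y hxy => (hBadj x y hxy).1) (Ne.symm hub2) u h rfl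
    have hvQ2 : v ∉ Q2.support := fun h =>
      support_avoid Q2 (fun x y hxy => (hBadj x y hxy).2) (Ne.symm hvb2) v h rfl
    have hb2Q1 : b2 ∉ Q1.support := fun h => hdisj b2 h Q2.end_mem_support
    have ha1Q2 : a1 ∉ Q2.support := fun h => hdisj a1 Q1.start_mem_support h
    have hnew1 : s(a1, b2) ∉ Q1.edges :=
      fun h => hb2Q1 (mem_support_of_mem_edge Q1 h (Sym2.mem_mk_right _ _))
    have hnew2 : s(a1, b2) ∉ Q2.edges :=
      fun h => ha1Q2 (mem_support_of_mem_edge Q2 h (Sym2.mem_mk_left _ _))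
    have hedge : ∀ (s t : V) (Q : (deleteAdd B u v a1 b2).Walk s t),
        s(a1, b2) ∉ Q.edges → ∀ e ∈ Q.edges, e ∈ B.edgeSet := by
      intro s t Q hQn e he
      induction e using Sym2.ind with
      | _ x y =>
        have hadj := Q.edges_subset_edgeSet he
        rw [SimpleGraph.mem_edgeSet] at hadj ⊢
        rcases (deleteAdd_adj_iff.mp hadj).2.2.2.2.2 with h | ⟨rfl, rfl⟩ | ⟨rfl, rfl⟩
        · exact h
        · exact absurd he hQn
        · exact absurd he (by rwa [Sym2.eq_swap])
    have hedge1 := hedge a1 b1 Q1 hnew1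
    have hedge2 := hedge a2 b2 Q2 hnew2
    set M : Set (Sym2 V) := insert s(u, a1) (insert s(v, b2) (M' \ {s(a1, b2)})) with hM
    have hpmM : IsPMOn B Set.univ M := by
      refine ⟨?_, ?_, ?_⟩
      · intro e he
        rcases he with rfl | rfl | ⟨heM', hne⟩
        · exact hcover.1 (by simp)
        · exact hcover.1 (by simp)
        · have h2 : e ∈ (deleteAdd B u v a1 b2).edgeSet := hpm'.1 e heM'
          rw [Set.mem_singleton_iff] at hne
          induction e using Sym2.ind with
          | _ x y =>
            rw [SimpleGraph.mem_edgeSet] at h2 ⊢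
            rcases (deleteAdd_adj_iff.mp h2).2.2.2.2.2 with h | ⟨rfl, rfl⟩ | ⟨rfl, rfl⟩
            · exact h
            · exact absurd rfl hne
            · exact absurd Sym2.eq_swap hne
      · exact fun e _ y _ => Set.mem_univ y
      · rintro x -
        by_cases hxu : x = u
        · subst x
          refine ⟨s(u, a1), ⟨Set.mem_insert _ _, Sym2.mem_mk_left _ _⟩, ?_⟩
          rintro f ⟨hf, hxf⟩
          rcases hf with rfl | rfl | ⟨hfM', -⟩
          · rfl
          · exfalso
            rcases Sym2.mem_iff.mp hxf with rfl | rfl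
            exacts [huv rfl, hub2 rfl]
          · exact absurd rfl (hM'avoid f hfM' u hxf).1
        by_cases hxv : x = v
        · subst x
          refine ⟨s(v, b2), ⟨Set.mem_insert_of_mem _ (Set.mem_insert _ _),
            Sym2.mem_mk_left _ _⟩, ?_⟩
          rintro f ⟨hf, hxf⟩
          rcases hf with rfl | rfl | ⟨hfM', -⟩
          · exfalso
            rcases Sym2.mem_iff.mp hxf with rfl | rfl
            exacts [huv rfl, hva1 rfl]
          · rfl
          · exact absurd rfl (hM'avoid f hfM' v hxf).2
        by_cases hxa1 : x = a1
        · subst x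
          refine ⟨s(u, a1), ⟨Set.mem_insert _ _, Sym2.mem_mk_right _ _⟩, ?_⟩
          rintro f ⟨hf, hxf⟩
          rcases hf with rfl | rfl | ⟨hfM', hfne⟩
          · rfl
          · exfalso
            rcases Sym2.mem_iff.mp hxf with rfl | rfl
            exacts [hva1 rfl, h1b2 rfl]
          · exact absurd (huna1' f hfM' hxf) hfne
        by_cases hxb2 : x = b2
        · subst x
          refine ⟨s(v, b2), ⟨Set.mem_insert_of_mem _ (Set.mem_insert _ _),
            Sym2.mem_mk_right _ _⟩, ?_⟩
          rintro f ⟨hf, hxf⟩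
          rcases hf with rfl | rfl | ⟨hfM', hfne⟩
          · exfalso
            rcases Sym2.mem_iff.mp hxf with rfl | rfl
            exacts [hub2 rfl, h1b2 rfl]
          · rfl
          · exact absurd ((hunb2' f hfM' hxf).trans Sym2.eq_swap) hfne
        · obtain ⟨e, ⟨heM', hxe⟩, hequniq⟩ := hpm'.2.2 x ⟨Set.mem_univ x, by
            simp only [Set.mem_insert_iff, Set.mem_singleton_iff, not_or]
            exact ⟨hxu, hxv⟩⟩
          have hene : e ≠ s(a1, b2) := by
            rintro rfl
            rcases Sym2.mem_iff.mp hxe with rfl | rfl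
            exacts [hxa1 rfl, hxb2 rfl]
          refine ⟨e, ⟨Set.mem_insert_of_mem _ (Set.mem_insert_of_mem _ ⟨heM', hene⟩),
            hxe⟩, ?_⟩
          rintro f ⟨hf, hxf⟩
          rcases hf with rfl | rfl | ⟨hfM', -⟩
          · exfalso
            rcases Sym2.mem_iff.mp hxf with rfl | rfl
            exacts [hxu rfl, hxa1 rfl]
          · exfalso
            rcases Sym2.mem_iff.mp hxf with rfl | rfl
            exacts [hxv rfl, hxb2 rfl]
          · exact hequniq f ⟨hfM', hxf⟩
    have hFM : ({s(u, a1), s(v, b2), s(a2, b1)} : Set (Sym2 V)) ⊆ M := by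
      rintro e (rfl | rfl | rfl)
      · exact Set.mem_insert _ _
      · exact Set.mem_insert_of_mem _ (Set.mem_insert _ _)
      · refine Set.mem_insert_of_mem _ (Set.mem_insert_of_mem _ ⟨hM'a2b1, ?_⟩)
        rw [Set.mem_singleton_iff]
        intro h
        rcases Sym2.eq_iff.mp h with ⟨h1, -⟩ | ⟨h1, -⟩
        exacts [h12 h1.symm, h2b2 h1]
    refine ⟨M, hpmM, hFM, Q1.transfer _ hedge1, Q2.transfer _ hedge2,
      hQ1.transfer _, hQ2.transfer _,
      internallyMConformal_transfer hedge1 hc1 ?_ ?_,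
      internallyMConformal_transfer hedge2 hc2 ?_ ?_, ?_⟩
    · intro e heM' hee hey
      refine Set.mem_insert_of_mem _ (Set.mem_insert_of_mem _ ⟨heM', ?_⟩)
      rw [Set.mem_singleton_iff]
      rintro rfl
      exact (hey a1 (Sym2.mem_mk_left _ _)).2.1 rfl
    · intro e heM hee hey
      rcases heM with rfl | rfl | ⟨heM', -⟩
      · exact absurd (hey u (Sym2.mem_mk_left _ _)).1 huQ1
      · exact absurd (hey b2 (Sym2.mem_mk_right _ _)).1 hb2Q1
      · exact heM'
    · intro e heM' hee hey
      refine Set.mem_insert_of_mem _ (Set.mem_insert_of_mem _ ⟨heM', ?_⟩)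
      rw [Set.mem_singleton_iff]
      rintro rfl
      exact ha1Q2 (hey a1 (Sym2.mem_mk_left _ _)).1
    · intro e heM hee hey
      rcases heM with rfl | rfl | ⟨heM', -⟩
      · exact absurd (hey a1 (Sym2.mem_mk_right _ _)).1 ha1Q2
      · exact absurd rfl (hey b2 (Sym2.mem_mk_right _ _)).2.2
      · exact heM'
    · intro x hx1 hx2
      rw [SimpleGraph.Walk.support_transfer] at hx1 hx2
      exact hdisj x hx1 hx2

end Paper
end
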